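/- Let κ > 0, C₀ ≥ 1, L > 0 and M ≥ 1. Suppose Ω, r, φ satisfy on Q equations (N2) and (N3) and the axis normalization, together with: |g(y)| ≤ L|y| for all y ∈ ℝ; 1/M ≤ Ω ≤ M, r ≤ Mϱ and ∂_ū r ≥ 1/4 on Q; and the bounds |φ| ≤ C₀ r and |∂_ū φ| ≤ C₀ on Q. Then there exists C > 0, depending only on κ, L, M, C₀, such that on Q: |∂_u r + 1/2| ≤ C ϱ², |∂_ū r − 1/2| ≤ C ϱ², and |Ω − 1| ≤ C ϱ². -/

import Mathlib

open Real

/-- Partial derivative in the null variable `u`. -/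
noncomputable def pdu (f : ℝ → ℝ → ℝ) (u v : ℝ) : ℝ := deriv (fun u' => f u' v) u

/-- Partial derivative in the null variable `ū`. -/
noncomputable def pdub (f : ℝ → ℝ → ℝ) (u v : ℝ) : ℝ := deriv (fun v' => f u v') v

/-- The rescaled double-null domain `Q = {(u,ū) : −2 ≤ u ≤ ū ≤ 0}`. -/
def Qset : Set (ℝ × ℝ) := {p | -2 ≤ p.1 ∧ p.1 ≤ p.2 ∧ p.2 ≤ 0}

/-- `ϱ = (ū − u)/2`. -/
noncomputable def vrho (p : ℝ × ℝ) : ℝ := (p.2 - p.1) / 2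

/-- The axis normalization `r = 0`, `∂_ū r = 1/2`, `∂_u r = −1/2`, `Ω = 1`, `φ = 0` on
the axis `Γ = {u = ū}` (inside `Q`). -/
def AxisNormalized (Ω r φ : ℝ → ℝ → ℝ) : Prop :=
  ∀ u ∈ Set.Icc (-2 : ℝ) 0,
    r u u = 0 ∧ pdub r u u = 1 / 2 ∧ pdu r u u = -(1 / 2) ∧ Ω u u = 1 ∧ φ u u = 0

/-- `Ω`, `r`, `φ` are `Cⁿ` on a neighborhood of `Q`. -/
def SmoothNearQ (n : ℕ) (Ω r φ : ℝ → ℝ → ℝ) : Prop :=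
  ∃ V : Set (ℝ × ℝ), IsOpen V ∧ Qset ⊆ V ∧
    ContDiffOn ℝ n (fun p : ℝ × ℝ => Ω p.1 p.2) V ∧
    ContDiffOn ℝ n (fun p : ℝ × ℝ => r p.1 p.2) V ∧
    ContDiffOn ℝ n (fun p : ℝ × ℝ => φ p.1 p.2) V

/-- Equation (N1): `∂_u(Ω^{−2} ∂_u r) = −Ω^{−2} κ r (∂_u φ)²`. -/
def EqN1 (κ : ℝ) (Ω r φ : ℝ → ℝ → ℝ) (u v : ℝ) : Prop :=
  pdu (fun u' v' => ((Ω u' v') ^ 2)⁻¹ * pdu r u' v') u v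
    = -(((Ω u v) ^ 2)⁻¹ * κ * r u v * (pdu φ u v) ^ 2)

/-- Equation (N2): `∂_ū(Ω^{−2} ∂_ū r) = −Ω^{−2} κ r (∂_ū φ)²`. -/
def EqN2 (κ : ℝ) (Ω r φ : ℝ → ℝ → ℝ) (u v : ℝ) : Prop :=
  pdub (fun u' v' => ((Ω u' v') ^ 2)⁻¹ * pdub r u' v') u v
    = -(((Ω u v) ^ 2)⁻¹ * κ * r u v * (pdub φ u v) ^ 2)

/-- Equation (N3): `∂_u ∂_ū r = κ Ω² g(φ)² / (4r)`. -/
def EqN3 (κ : ℝ) (g : ℝ → ℝ) (Ω r φ : ℝ → ℝ → ℝ) (u v : ℝ) : Prop :=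
  pdu (pdub r) u v = κ * (Ω u v) ^ 2 * (g (φ u v)) ^ 2 / (4 * r u v)

/-- Equation (N4): `∂_u(r ∂_ū φ) + ∂_ū(r ∂_u φ) = −Ω² g(φ)g′(φ)/(2r)`. -/
def EqN4 (g : ℝ → ℝ) (Ω r φ : ℝ → ℝ → ℝ) (u v : ℝ) : Prop :=
  pdu (fun u' v' => r u' v' * pdub φ u' v') u v
      + pdub (fun u' v' => r u' v' * pdu φ u' v') u v
    = -((Ω u v) ^ 2 * g (φ u v) * deriv g (φ u v) / (2 * r u v))

/-- Equation (N5): `∂_u ∂_ū (log Ω) = −(κ/2) ∂_u φ ∂_ū φ − (κΩ²/8) g(φ)²/r²`. -/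
def EqN5 (κ : ℝ) (g : ℝ → ℝ) (Ω r φ : ℝ → ℝ → ℝ) (u v : ℝ) : Prop :=
  pdu (pdub (fun u' v' => Real.log (Ω u' v'))) u v
    = -((κ / 2) * pdu φ u v * pdub φ u v)
      - (κ * (Ω u v) ^ 2 / 8) * (g (φ u v)) ^ 2 / (r u v) ^ 2

/-! Along the segment `{(s, ū) : u ≤ s ≤ ū}` the quantity `∂_ū r` has `u`-derivative given by (N3),
and along `{(u, v) : u ≤ v ≤ ū}` the quantities `∂_u r` (via `∂_ū ∂_u r = ∂_u ∂_ū r`) and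
`Ω⁻² ∂_ū r` have `ū`-derivatives given by (N3) and (N2); both segments end on the axis, where these
quantities are `1/2`, `-1/2`, `1/2`. Off the axis the right-hand sides are `O(ϱ)`, because
`g(φ)² ≤ L²C₀²r²`, `r ≤ Mϱ` and `|∂_ū φ| ≤ C₀`, and the segments have length `2ϱ`, so all three
quantities are within `O(ϱ²)` of their axis values. Comparing `∂_ū r ≥ 1/4` with `Ω⁻² ∂_ū r` then
gives `|Ω⁻² - 1| = O(ϱ²)`, hence `|Ω - 1| = O(ϱ²)` since `Ω ≤ M`. -/

open Function Set

section PartialDerivatives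

variable {f : ℝ → ℝ → ℝ} {V : Set (ℝ × ℝ)} {a b : ℝ} {p : ℝ × ℝ}

theorem pdu_eq_fderiv (h : DifferentiableAt ℝ (uncurry f) (a, b)) :
    pdu f a b = fderiv ℝ (uncurry f) (a, b) (1, 0) :=
  (h.hasFDerivAt.comp_hasDerivAt a ((hasDerivAt_id' a).prodMk (hasDerivAt_const a b)) :).deriv

theorem pdub_eq_fderiv (h : DifferentiableAt ℝ (uncurry f) (a, b)) :
    pdub f a b = fderiv ℝ (uncurry f) (a, b) (0, 1) :=
  (h.hasFDerivAt.comp_hasDerivAt b ((hasDerivAt_const b a).prodMk (hasDerivAt_id' b)) :).deriv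

theorem eqOn_uncurry_pdu (hV : IsOpen V) (hf : ContDiffOn ℝ 2 (uncurry f) V) :
    EqOn (uncurry (pdu f)) (fun q => fderiv ℝ (uncurry f) q (1, 0)) V := fun q hq =>
  pdu_eq_fderiv ((hf.contDiffAt (hV.mem_nhds hq)).differentiableAt (by norm_num))

theorem eqOn_uncurry_pdub (hV : IsOpen V) (hf : ContDiffOn ℝ 2 (uncurry f) V) :
    EqOn (uncurry (pdub f)) (fun q => fderiv ℝ (uncurry f) q (0, 1)) V := fun q hq =>
  pdub_eq_fderiv ((hf.contDiffAt (hV.mem_nhds hq)).differentiableAt (by norm_num))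

theorem differentiableAt_fderiv_of_contDiffOn (hV : IsOpen V)
    (hf : ContDiffOn ℝ 2 (uncurry f) V) (hp : p ∈ V) :
    DifferentiableAt ℝ (fderiv ℝ (uncurry f)) p :=
  ((hf.fderiv_of_isOpen hV (m := 1) (by norm_num)).contDiffAt (hV.mem_nhds hp)).differentiableAt
    one_ne_zero

theorem differentiableAt_uncurry_pdu (hV : IsOpen V) (hf : ContDiffOn ℝ 2 (uncurry f) V)
    (hp : p ∈ V) : DifferentiableAt ℝ (uncurry (pdu f)) p :=
  (((differentiableAt_fderiv_of_contDiffOn hV hf hp).clm_apply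
    (differentiableAt_const _))).congr_of_eventuallyEq
    ((eqOn_uncurry_pdu hV hf).eventuallyEq_of_mem (hV.mem_nhds hp))

theorem differentiableAt_uncurry_pdub (hV : IsOpen V) (hf : ContDiffOn ℝ 2 (uncurry f) V)
    (hp : p ∈ V) : DifferentiableAt ℝ (uncurry (pdub f)) p :=
  (((differentiableAt_fderiv_of_contDiffOn hV hf hp).clm_apply
    (differentiableAt_const _))).congr_of_eventuallyEq
    ((eqOn_uncurry_pdub hV hf).eventuallyEq_of_mem (hV.mem_nhds hp))

theorem fderiv_uncurry_pdu_apply (hV : IsOpen V) (hf : ContDiffOn ℝ 2 (uncurry f) V)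
    (hp : p ∈ V) (e : ℝ × ℝ) :
    fderiv ℝ (uncurry (pdu f)) p e = fderiv ℝ (fderiv ℝ (uncurry f)) p e (1, 0) := by
  rw [((eqOn_uncurry_pdu hV hf).eventuallyEq_of_mem (hV.mem_nhds hp)).fderiv_eq,
    fderiv_clm_apply (differentiableAt_fderiv_of_contDiffOn hV hf hp) (differentiableAt_const _)]
  simp

theorem fderiv_uncurry_pdub_apply (hV : IsOpen V) (hf : ContDiffOn ℝ 2 (uncurry f) V)
    (hp : p ∈ V) (e : ℝ × ℝ) :
    fderiv ℝ (uncurry (pdub f)) p e = fderiv ℝ (fderiv ℝ (uncurry f)) p e (0, 1) := by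
  rw [((eqOn_uncurry_pdub hV hf).eventuallyEq_of_mem (hV.mem_nhds hp)).fderiv_eq,
    fderiv_clm_apply (differentiableAt_fderiv_of_contDiffOn hV hf hp) (differentiableAt_const _)]
  simp

theorem pdub_pdu_eq_pdu_pdub (hV : IsOpen V) (hf : ContDiffOn ℝ 2 (uncurry f) V)
    (hab : (a, b) ∈ V) : pdub (pdu f) a b = pdu (pdub f) a b := by
  rw [pdub_eq_fderiv (differentiableAt_uncurry_pdu hV hf hab),
    pdu_eq_fderiv (differentiableAt_uncurry_pdub hV hf hab),
    fderiv_uncurry_pdu_apply hV hf hab, fderiv_uncurry_pdub_apply hV hf hab]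
  exact (hf.contDiffAt (hV.mem_nhds hab)).isSymmSndFDerivAt (by simp) _ _

theorem differentiableAt_uncurry_inv_sq_mul_pdub {Ω : ℝ → ℝ → ℝ} (hV : IsOpen V)
    (hΩ : ContDiffOn ℝ 2 (uncurry Ω) V) (hf : ContDiffOn ℝ 2 (uncurry f) V) (hp : p ∈ V)
    (hΩp : Ω p.1 p.2 ≠ 0) :
    DifferentiableAt ℝ (uncurry fun u v => (Ω u v ^ 2)⁻¹ * pdub f u v) p :=
  ((((hΩ.contDiffAt (hV.mem_nhds hp)).differentiableAt (by norm_num)).fun_pow 2).fun_inv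
    (pow_ne_zero 2 hΩp)).fun_mul (differentiableAt_uncurry_pdub hV hf hp)

end PartialDerivatives

/-- Unlike `norm_image_sub_le_of_norm_deriv_le_segment'`, the derivative bound is required only on
the open interval: below it comes from field equations that hold only off the axis. -/
theorem abs_sub_le_of_abs_deriv_le {f : ℝ → ℝ} {a b K : ℝ} (hab : a ≤ b)
    (hf : ∀ x ∈ Icc a b, DifferentiableAt ℝ f x) (hK : ∀ x ∈ Ioo a b, |deriv f x| ≤ K) :
    |f b - f a| ≤ K * (b - a) := by
  rcases hab.eq_or_lt with rfl | hlt
  · simp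
  obtain ⟨c, hc, hslope⟩ := exists_deriv_eq_slope f hlt
    (fun x hx => (hf x hx).continuousAt.continuousWithinAt)
    (fun x hx => (hf x (Ioo_subset_Icc_self hx)).differentiableWithinAt)
  have hba : 0 < b - a := sub_pos.2 hlt
  calc |f b - f a| = |deriv f c| * (b - a) := by
        rw [hslope, abs_div, abs_of_pos hba, div_mul_cancel₀ _ hba.ne']
    _ ≤ K * (b - a) := by gcongr; exact hK c hc

section NullSegments

variable {F : ℝ → ℝ → ℝ} {K : ℝ} {p : ℝ × ℝ}

theorem abs_sub_le_of_abs_pdu_le (hK : 0 ≤ K)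
    (hF : ∀ q ∈ Qset, DifferentiableAt ℝ (uncurry F) q)
    (hbound : ∀ q ∈ Qset, q.1 < q.2 → |pdu F q.1 q.2| ≤ K * vrho q) (hp : p ∈ Qset) :
    |F p.2 p.2 - F p.1 p.2| ≤ 2 * K * vrho p ^ 2 := by
  obtain ⟨u, w⟩ := p
  obtain ⟨hu, huw, hw⟩ := hp
  have hQ : ∀ s ∈ Icc u w, (s, w) ∈ Qset := fun s hs => ⟨hu.trans hs.1, hs.2, hw⟩
  calc |F w w - F u w| ≤ K * vrho (u, w) * (w - u) :=
        abs_sub_le_of_abs_deriv_le huw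
          (fun s hs => (hF _ (hQ s hs)).comp s ((differentiableAt_id).prodMk
            (differentiableAt_const w)))
          (fun s hs => (hbound _ (hQ s (Ioo_subset_Icc_self hs)) hs.2).trans
            (by unfold vrho; gcongr; exact hs.1.le))
    _ = 2 * K * vrho (u, w) ^ 2 := by unfold vrho; ring

theorem abs_sub_le_of_abs_pdub_le (hK : 0 ≤ K)
    (hF : ∀ q ∈ Qset, DifferentiableAt ℝ (uncurry F) q)
    (hbound : ∀ q ∈ Qset, q.1 < q.2 → |pdub F q.1 q.2| ≤ K * vrho q) (hp : p ∈ Qset) :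
    |F p.1 p.2 - F p.1 p.1| ≤ 2 * K * vrho p ^ 2 := by
  obtain ⟨u, w⟩ := p
  obtain ⟨hu, huw, hw⟩ := hp
  have hQ : ∀ v ∈ Icc u w, (u, v) ∈ Qset := fun v hv => ⟨hu, hv.1, hv.2.trans hw⟩
  calc |F u w - F u u| ≤ K * vrho (u, w) * (w - u) :=
        abs_sub_le_of_abs_deriv_le huw
          (fun v hv => (hF _ (hQ v hv)).comp v ((differentiableAt_const u).prodMk
            differentiableAt_id))
          (fun v hv => (hbound _ (hQ v (Ioo_subset_Icc_self hv)) hv.1).trans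
            (by unfold vrho; gcongr; exact hv.2.le))
    _ = 2 * K * vrho (u, w) ^ 2 := by unfold vrho; ring

end NullSegments

section FieldEquations

variable {κ L M C₀ : ℝ} {g : ℝ → ℝ} {Ω r φ : ℝ → ℝ → ℝ} {p : ℝ × ℝ}

theorem abs_pdu_pdub_le_of_eqN3 (hκ : 0 ≤ κ) (hgL : ∀ y, |g y| ≤ L * |y|)
    (hN3 : EqN3 κ g Ω r φ p.1 p.2) (hr : 0 < r p.1 p.2) (hΩ : 0 ≤ Ω p.1 p.2)
    (hΩM : Ω p.1 p.2 ≤ M) (hrM : r p.1 p.2 ≤ M * vrho p) (hφ : |φ p.1 p.2| ≤ C₀ * r p.1 p.2) :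
    |pdu (pdub r) p.1 p.2| ≤ κ * M ^ 3 * L ^ 2 * C₀ ^ 2 / 4 * vrho p := by
  have hg : g (φ p.1 p.2) ^ 2 ≤ (L * C₀ * r p.1 p.2) ^ 2 :=
    calc g (φ p.1 p.2) ^ 2 ≤ (L * |φ p.1 p.2|) ^ 2 := by
          rw [← sq_abs (g _)]; exact pow_le_pow_left₀ (abs_nonneg _) (hgL _) 2
      _ = L ^ 2 * |φ p.1 p.2| ^ 2 := mul_pow _ _ 2
      _ ≤ L ^ 2 * (C₀ * r p.1 p.2) ^ 2 := by gcongr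
      _ = (L * C₀ * r p.1 p.2) ^ 2 := by ring
  have hM : 0 ≤ M := hΩ.trans hΩM
  rw [hN3, abs_of_nonneg (by positivity)]
  calc κ * Ω p.1 p.2 ^ 2 * g (φ p.1 p.2) ^ 2 / (4 * r p.1 p.2)
      ≤ κ * M ^ 2 * (L * C₀ * r p.1 p.2) ^ 2 / (4 * r p.1 p.2) := by gcongr
    _ = κ * M ^ 2 * L ^ 2 * C₀ ^ 2 / 4 * r p.1 p.2 := by field_simp
    _ ≤ κ * M ^ 2 * L ^ 2 * C₀ ^ 2 / 4 * (M * vrho p) := by gcongr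
    _ = κ * M ^ 3 * L ^ 2 * C₀ ^ 2 / 4 * vrho p := by ring

theorem abs_pdub_inv_sq_mul_pdub_le_of_eqN2 (hκ : 0 ≤ κ) (hM : 0 < M)
    (hN2 : EqN2 κ Ω r φ p.1 p.2) (hr : 0 ≤ r p.1 p.2) (hΩ : M⁻¹ ≤ Ω p.1 p.2)
    (hrM : r p.1 p.2 ≤ M * vrho p) (hφ : |pdub φ p.1 p.2| ≤ C₀) :
    |pdub (fun u v => (Ω u v ^ 2)⁻¹ * pdub r u v) p.1 p.2| ≤ κ * M ^ 3 * C₀ ^ 2 * vrho p := by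
  have hρ : 0 ≤ vrho p := (mul_nonneg_iff_of_pos_left hM).1 (hr.trans hrM)
  have hΩinv : (Ω p.1 p.2 ^ 2)⁻¹ ≤ M ^ 2 :=
    calc (Ω p.1 p.2 ^ 2)⁻¹ ≤ ((M⁻¹) ^ 2)⁻¹ := by gcongr
      _ = M ^ 2 := by rw [inv_pow, inv_inv]
  have hφ2 : pdub φ p.1 p.2 ^ 2 ≤ C₀ ^ 2 := by
    rw [← sq_abs]; exact pow_le_pow_left₀ (abs_nonneg _) hφ 2
  rw [hN2, abs_neg, abs_of_nonneg (by positivity)]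
  calc (Ω p.1 p.2 ^ 2)⁻¹ * κ * r p.1 p.2 * pdub φ p.1 p.2 ^ 2
      ≤ M ^ 2 * κ * (M * vrho p) * C₀ ^ 2 := by gcongr
    _ = κ * M ^ 3 * C₀ ^ 2 * vrho p := by ring

end FieldEquations

theorem abs_sub_one_le_of_abs_inv_sq_mul_sub_half_le {Ω d M a b : ℝ} (hΩ : 0 < Ω)
    (hΩM : Ω ≤ M) (hd : 1 / 4 ≤ d) (hda : |d - 1 / 2| ≤ a) (hdb : |(Ω ^ 2)⁻¹ * d - 1 / 2| ≤ b) :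
    |Ω - 1| ≤ 4 * M ^ 2 * (a + b) := by
  have hd0 : 0 < d := by linarith
  have hinv : |(Ω ^ 2)⁻¹ - 1| * d ≤ a + b :=
    calc |(Ω ^ 2)⁻¹ - 1| * d = |((Ω ^ 2)⁻¹ - 1) * d| := by rw [abs_mul, abs_of_pos hd0]
      _ = |((Ω ^ 2)⁻¹ * d - 1 / 2) - (d - 1 / 2)| := by ring_nf
      _ ≤ a + b := (abs_sub _ _).trans (by linarith)
  have hinv' : |(Ω ^ 2)⁻¹ - 1| ≤ 4 * (a + b) := by
    nlinarith [abs_nonneg ((Ω ^ 2)⁻¹ - 1)]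
  calc |Ω - 1| ≤ |Ω - 1| * (Ω + 1) := le_mul_of_one_le_right (abs_nonneg _) (by linarith)
    _ = |Ω ^ 2 * (1 - (Ω ^ 2)⁻¹)| := by
        rw [← abs_of_pos (by linarith : 0 < Ω + 1), ← abs_mul]; congr 1; field_simp; ring
    _ = Ω ^ 2 * |(Ω ^ 2)⁻¹ - 1| := by rw [abs_mul, abs_of_pos (pow_pos hΩ 2), abs_sub_comm]
    _ ≤ M ^ 2 * (4 * (a + b)) := by gcongr
    _ = 4 * M ^ 2 * (a + b) := by ring

theorem refined_geometry_bounds_general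
    (κ C₀ L M : ℝ) (hκ : 0 < κ) (hM : 1 ≤ M) :
    ∃ C > (0:ℝ),
      ∀ (g : ℝ → ℝ) (Ω r φ : ℝ → ℝ → ℝ),
        ContDiff ℝ 1 g →
        SmoothNearQ 2 Ω r φ →
        (∀ p ∈ Qset, p.1 < p.2 → 0 < r p.1 p.2) →
        (∀ p ∈ Qset, p.1 < p.2 → EqN2 κ Ω r φ p.1 p.2) →
        (∀ p ∈ Qset, p.1 < p.2 → EqN3 κ g Ω r φ p.1 p.2) →
        AxisNormalized Ω r φ →
        (∀ y : ℝ, |g y| ≤ L * |y|) →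
        (∀ p ∈ Qset, M⁻¹ ≤ Ω p.1 p.2 ∧ Ω p.1 p.2 ≤ M) →
        (∀ p ∈ Qset, r p.1 p.2 ≤ M * vrho p) →
        (∀ p ∈ Qset, 1 / 4 ≤ pdub r p.1 p.2) →
        (∀ p ∈ Qset, |φ p.1 p.2| ≤ C₀ * r p.1 p.2) →
        (∀ p ∈ Qset, |pdub φ p.1 p.2| ≤ C₀) →
        ∀ p ∈ Qset,
          |pdu r p.1 p.2 + 1 / 2| ≤ C * vrho p ^ 2 ∧
          |pdub r p.1 p.2 - 1 / 2| ≤ C * vrho p ^ 2 ∧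
          |Ω p.1 p.2 - 1| ≤ C * vrho p ^ 2 := by
  set K₃ := κ * M ^ 3 * L ^ 2 * C₀ ^ 2 / 4
  set K₂ := κ * M ^ 3 * C₀ ^ 2
  have hK₃ : 0 ≤ K₃ := by positivity
  have hK₂ : 0 ≤ K₂ := by positivity
  refine ⟨8 * M ^ 2 * (K₃ + K₂) + 1, by positivity, ?_⟩
  rintro g Ω r φ - ⟨V, hV, hQV, hΩ, hr, -⟩ hrpos hN2 hN3 hax hgL hΩb hrb hdrb hφb hdφb p hp
  have hMpos : 0 < M := one_pos.trans_le hM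
  have hΩpos : ∀ q ∈ Qset, 0 < Ω q.1 q.2 := fun q hq => (inv_pos.2 hMpos).trans_le (hΩb q hq).1
  have hmixed : ∀ q ∈ Qset, q.1 < q.2 → |pdu (pdub r) q.1 q.2| ≤ K₃ * vrho q := fun q hq hlt =>
    abs_pdu_pdub_le_of_eqN3 hκ.le hgL (hN3 q hq hlt) (hrpos q hq hlt) (hΩpos q hq).le
      (hΩb q hq).2 (hrb q hq) (hφb q hq)
  have hdub := abs_sub_le_of_abs_pdu_le hK₃
    (fun q hq => differentiableAt_uncurry_pdub hV hr (hQV hq)) hmixed hp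
  have hdu := abs_sub_le_of_abs_pdub_le hK₃
    (fun q hq => differentiableAt_uncurry_pdu hV hr (hQV hq))
    (fun q hq hlt => pdub_pdu_eq_pdu_pdub hV hr (hQV hq) ▸ hmixed q hq hlt) hp
  have hinvdub := abs_sub_le_of_abs_pdub_le hK₂
    (fun q hq => differentiableAt_uncurry_inv_sq_mul_pdub hV hΩ hr (hQV hq) (hΩpos q hq).ne')
    (fun q hq hlt => abs_pdub_inv_sq_mul_pdub_le_of_eqN2 hκ.le hMpos (hN2 q hq hlt)
      (hrpos q hq hlt).le (hΩb q hq).1 (hrb q hq) (hdφb q hq)) hp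
  obtain ⟨u, w⟩ := p
  obtain ⟨-, hdub_w, -⟩ := hax w ⟨hp.1.trans hp.2.1, hp.2.2⟩
  obtain ⟨-, hdub_u, hdu_u, hΩ_u, -⟩ := hax u ⟨hp.1, hp.2.1.trans hp.2.2⟩
  simp only [hdub_w, hdub_u, hdu_u, hΩ_u, one_pow, inv_one, one_mul, sub_neg_eq_add]
    at hdub hdu hinvdub
  rw [abs_sub_comm] at hdub
  have hΩsub := abs_sub_one_le_of_abs_inv_sq_mul_sub_half_le (hΩpos _ hp) (hΩb _ hp).2 (hdrb _ hp)
    hdub hinvdub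
  have hK₃C : 2 * K₃ ≤ 8 * M ^ 2 * (K₃ + K₂) + 1 := by nlinarith [one_le_pow₀ (n := 2) hM]
  refine ⟨hdu.trans (by gcongr), hdub.trans (by gcongr), hΩsub.trans ?_⟩
  calc 4 * M ^ 2 * (2 * K₃ * vrho (u, w) ^ 2 + 2 * K₂ * vrho (u, w) ^ 2)
      = 8 * M ^ 2 * (K₃ + K₂) * vrho (u, w) ^ 2 := by ring
    _ ≤ _ := by gcongr; linarith

/-- Refined geometric bounds: under (N2), (N3), the axis normalization, and the uniform
bounds `|φ| ≤ C₀ r`, `|∂_ū φ| ≤ C₀` on `Q`, there is a constant `C > 0` depending only on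
`κ, L, M, C₀` such that on `Q`: `|∂_u r + 1/2| ≤ Cϱ²`, `|∂_ū r − 1/2| ≤ Cϱ²` and
`|Ω − 1| ≤ Cϱ²`. -/
theorem refined_geometry_bounds
    (κ C₀ L M : ℝ) (hκ : 0 < κ) (hC₀ : 1 ≤ C₀) (hL : 0 < L) (hM : 1 ≤ M) :
    ∃ C > (0:ℝ),
      ∀ (g : ℝ → ℝ) (Ω r φ : ℝ → ℝ → ℝ),
        ContDiff ℝ 1 g →
        SmoothNearQ 2 Ω r φ →
        (∀ p ∈ Qset, p.1 < p.2 → 0 < r p.1 p.2) →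
        (∀ p ∈ Qset, p.1 < p.2 → EqN2 κ Ω r φ p.1 p.2) →
        (∀ p ∈ Qset, p.1 < p.2 → EqN3 κ g Ω r φ p.1 p.2) →
        AxisNormalized Ω r φ →
        (∀ y : ℝ, |g y| ≤ L * |y|) →
        (∀ p ∈ Qset, M⁻¹ ≤ Ω p.1 p.2 ∧ Ω p.1 p.2 ≤ M) →
        (∀ p ∈ Qset, r p.1 p.2 ≤ M * vrho p) →
        (∀ p ∈ Qset, 1 / 4 ≤ pdub r p.1 p.2) →
        (∀ p ∈ Qset, |φ p.1 p.2| ≤ C₀ * r p.1 p.2) →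
        (∀ p ∈ Qset, |pdub φ p.1 p.2| ≤ C₀) →
        ∀ p ∈ Qset,
          |pdu r p.1 p.2 + 1 / 2| ≤ C * vrho p ^ 2 ∧
          |pdub r p.1 p.2 - 1 / 2| ≤ C * vrho p ^ 2 ∧
          |Ω p.1 p.2 - 1| ≤ C * vrho p ^ 2 :=
  refined_geometry_bounds_general κ C₀ L M hκ hM
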